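/- arXiv:2005.10140 — 10 statements merged into one kernel-verified Lean document; each statement's English description precedes it below -/
import Mathlib

section
/- (Invariance of D₀ ⟂ 𝒱 under J, G, H.) If X ∈ E satisfies ḡ(X, ξ) = ḡ(X, N) = 0 and ḡ(X, J_aξ) = ḡ(X, J_aN) = 0 for all a = 1, 2, 3, then for each b = 1, 2, 3 the vector J_bX satisfies the same relations: ḡ(J_bX, ξ) = ḡ(J_bX, N) = 0 and ḡ(J_bX, J_aξ) = ḡ(J_bX, J_aN) = 0 for all a = 1, 2, 3. -/
theorem stmt_5 {E : Type*} [AddCommGroup E] [Module ℝ E]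
    (g : E →ₗ[ℝ] E →ₗ[ℝ] ℝ)
    (hg_symm : ∀ X Y : E, g X Y = g Y X)
    (J G H : E →ₗ[ℝ] E) (U V : E)
    (hJJ : ∀ X : E, J (J X) = -X)
    (hJg : ∀ X Y : E, g (J X) (J Y) = g X Y)
    (hG_skew : ∀ X Y : E, g (G X) Y = -(g X (G Y)))
    (hGJ : ∀ X : E, G (J X) = -(J (G X)))
    (hGU : G U = 0)
    (hUU : g U U = 1)
    (hV : V = -(J U))
    (hH : ∀ X : E, H X = G (J X))
    (hGG : ∀ X : E, G (G X) = -X + (g U X) • U + (g V X) • V)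
    (ξ N : E)
    (hxx : g ξ ξ = 0) (hNN : g N N = 0) (hxN : g ξ N = 1)
    (hxU : g ξ U = 0) (hxV : g ξ V = 0) (hNU : g N U = 0) (hNV : g N V = 0)
    (hJxN : g (J ξ) N = 0) (hGxN : g (G ξ) N = 0) (hHxN : g (H ξ) N = 0)
    (Jn : Fin 3 → E →ₗ[ℝ] E)
    (hJn0 : Jn 0 = J) (hJn1 : Jn 1 = G) (hJn2 : Jn 2 = H)
    :
    ∀ X : E,
      (g X ξ = 0 ∧ g X N = 0 ∧ ∀ a : Fin 3, g X (Jn a ξ) = 0 ∧ g X (Jn a N) = 0) →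
      ∀ b : Fin 3,
        g (Jn b X) ξ = 0 ∧ g (Jn b X) N = 0 ∧
        ∀ a : Fin 3, g (Jn b X) (Jn a ξ) = 0 ∧ g (Jn b X) (Jn a N) = 0 := by
  have hJ_skew : ∀ X Y : E, g (J X) Y = -(g X (J Y)) := by
    intro X Y
    have h := hJg X (J Y)
    rw [hJJ Y, map_neg] at h
    linarith
  have hH_skew : ∀ X Y : E, g (H X) Y = -(g X (H Y)) := by
    intro X Y
    simp [hH, hG_skew, hJ_skew, hGJ]
  have hJU : J U = -V := by rw [hV, neg_neg]
  have hJV : J V = U := by rw [hV, map_neg, hJJ, neg_neg]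
  have hJG : ∀ X : E, J (G X) = -(H X) := by
    intro X; rw [hH, hGJ, neg_neg]
  have hJH : ∀ X : E, J (H X) = G X := by
    intro X; rw [hH, hGJ, map_neg, hJJ, neg_neg]
  have hHJ : ∀ X : E, H (J X) = -(G X) := by
    intro X; rw [hH, hJJ, map_neg]
  have hGJ' : ∀ X : E, G (J X) = H X := fun X => (hH X).symm
  have hGH : ∀ X : E, G (H X) = -(J X) + g U (J X) • U + g V (J X) • V := by
    intro X; rw [hH, hGG]
  have hHG : ∀ X : E, H (G X) = J X - g U (J X) • U - g V (J X) • V := by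
    intro X
    rw [hH (G X), hJG X, map_neg, hGH X]
    abel
  have hHH : ∀ X : E, H (H X) = -X + g U X • U + g V X • V := by
    intro X; rw [hH (H X), hJH X, hGG]
  have hUx : g U ξ = 0 := by rw [hg_symm]; exact hxU
  have hVx : g V ξ = 0 := by rw [hg_symm]; exact hxV
  have hUN : g U N = 0 := by rw [hg_symm]; exact hNU
  have hVN : g V N = 0 := by rw [hg_symm]; exact hNV
  have hUJx : g U (J ξ) = 0 := by
    have h := hJ_skew U ξ
    rw [hJU] at h
    simp only [map_neg, LinearMap.neg_apply] at h
    linarith [hVx]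
  have hVJx : g V (J ξ) = 0 := by
    have h := hJ_skew V ξ
    rw [hJV] at h
    linarith [hUx]
  have hUJN : g U (J N) = 0 := by
    have h := hJ_skew U N
    rw [hJU] at h
    simp only [map_neg, LinearMap.neg_apply] at h
    linarith [hVN]
  have hVJN : g V (J N) = 0 := by
    have h := hJ_skew V N
    rw [hJV] at h
    linarith [hUN]
  intro X hX b
  obtain ⟨h1, h2, h3⟩ := hX
  have e0 := h3 0; have e1 := h3 1; have e2 := h3 2
  rw [hJn0] at e0; rw [hJn1] at e1; rw [hJn2] at e2
  obtain ⟨f1, f2⟩ := e0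
  obtain ⟨f3, f4⟩ := e1
  obtain ⟨f5, f6⟩ := e2
  have hcase : ∀ c : Fin 3, Jn c = J ∨ Jn c = G ∨ Jn c = H := by
    intro c
    fin_cases c
    exacts [Or.inl hJn0, Or.inr (Or.inl hJn1), Or.inr (Or.inr hJn2)]
  rcases hcase b with hb | hb | hb
  · rw [hb]
    refine ⟨?_, ?_, fun a => ?_⟩
    · rw [hJ_skew]; simp [f1]
    · rw [hJ_skew]; simp [f2]
    · rcases hcase a with ha | ha | ha <;> rw [ha] <;> constructor <;>
        rw [hJ_skew] <;>
        simp [hJJ, hJG, hJH, h1, h2, f3, f4, f5, f6]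
  · rw [hb]
    refine ⟨?_, ?_, fun a => ?_⟩
    · rw [hG_skew]; simp [f3]
    · rw [hG_skew]; simp [f4]
    · rcases hcase a with ha | ha | ha <;> rw [ha] <;> constructor <;>
        rw [hG_skew] <;>
        simp [hGJ', hGG, hGH, h1, h2, f1, f2, f5, f6,
          hUx, hVx, hUN, hVN, hUJx, hVJx, hUJN, hVJN]
  · rw [hb]
    refine ⟨?_, ?_, fun a => ?_⟩
    · rw [hH_skew]; simp [f5]
    · rw [hH_skew]; simp [f6]
    · rcases hcase a with ha | ha | ha <;> rw [ha] <;> constructor <;>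
        rw [hH_skew] <;>
        simp [hHJ, hHG, hHH, h1, h2, f1, f2, f3, f4,
          hUx, hVx, hUN, hVN, hUJx, hVJx, hUJN, hVJN]
end

section
/- (Supporting Proposition 3.4 on the minimal dimension of a null hypersurface of an indefinite complex contact manifold.) The ten vectors ξ, N, Jξ, Gξ, Hξ, JN, GN, HN, U, V are linearly independent in E. -/
set_option maxHeartbeats 2000000 in
theorem stmt_6 {E : Type*} [AddCommGroup E] [Module ℝ E]
    (g : E →ₗ[ℝ] E →ₗ[ℝ] ℝ)
    (hg_symm : ∀ X Y : E, g X Y = g Y X)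
    (J G H : E →ₗ[ℝ] E) (U V : E)
    (hJJ : ∀ X : E, J (J X) = -X)
    (hJg : ∀ X Y : E, g (J X) (J Y) = g X Y)
    (hG_skew : ∀ X Y : E, g (G X) Y = -(g X (G Y)))
    (hGJ : ∀ X : E, G (J X) = -(J (G X)))
    (hGU : G U = 0)
    (hUU : g U U = 1)
    (hV : V = -(J U))
    (hH : ∀ X : E, H X = G (J X))
    (hGG : ∀ X : E, G (G X) = -X + (g U X) • U + (g V X) • V)
    (ξ N : E)
    (hxx : g ξ ξ = 0) (hNN : g N N = 0) (hxN : g ξ N = 1)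
    (hxU : g ξ U = 0) (hxV : g ξ V = 0) (hNU : g N U = 0) (hNV : g N V = 0)
    (hJxN : g (J ξ) N = 0) (hGxN : g (G ξ) N = 0) (hHxN : g (H ξ) N = 0)
    (Jn : Fin 3 → E →ₗ[ℝ] E)
    (hJn0 : Jn 0 = J) (hJn1 : Jn 1 = G) (hJn2 : Jn 2 = H)
    :
    LinearIndependent ℝ ![ξ, N, J ξ, G ξ, H ξ, J N, G N, H N, U, V] := by

  -- J is skew with respect to g
  have Jskew : ∀ X Y : E, g (J X) Y = -(g X (J Y)) := by
    intro X Y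
    have h1 := hJg X (J Y)
    rw [hJJ Y] at h1
    simp only [map_neg, LinearMap.neg_apply] at h1
    linarith
  -- H is skew with respect to g
  have Hskew : ∀ X Y : E, g (H X) Y = -(g X (H Y)) := by
    intro X Y
    rw [hH, hG_skew, Jskew, hH, hGJ]
    simp
  -- basic vector identities
  have hJU : J U = -V := by rw [hV, neg_neg]
  have hJV : J V = U := by rw [hV, map_neg, hJJ, neg_neg]
  have hGV : G V = 0 := by rw [hV]; simp [hGJ, hGU]
  have hHU : H U = 0 := by rw [hH, hJU]; simp [hGV]
  have hHV : H V = 0 := by rw [hH, hJV, hGU]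
  have hJGx : J (G ξ) = -(H ξ) := by rw [hH, hGJ, neg_neg]
  have hJGN : J (G N) = -(H N) := by rw [hH, hGJ, neg_neg]
  -- scalar products among base vectors
  have gNx : g N ξ = 1 := by rw [hg_symm]; exact hxN
  have gUx : g U ξ = 0 := by rw [hg_symm]; exact hxU
  have gUN : g U N = 0 := by rw [hg_symm]; exact hNU
  have gVx : g V ξ = 0 := by rw [hg_symm]; exact hxV
  have gVN : g V N = 0 := by rw [hg_symm]; exact hNV
  have gUJU : g U (J U) = 0 := by
    have h1 := Jskew U U
    have h2 := hg_symm (J U) U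
    linarith
  have gUV : g U V = 0 := by rw [hV]; simp [gUJU]
  have gVU : g V U = 0 := by rw [hg_symm]; exact gUV
  have gVV : g V V = 1 := by rw [hV]; simp [hJg, hUU]
  -- products with J ξ
  have zJxx : g ξ (J ξ) = 0 := by
    have h1 := Jskew ξ ξ
    have h2 := hg_symm (J ξ) ξ
    linarith
  have zJxN : g N (J ξ) = 0 := by rw [hg_symm]; exact hJxN
  have zJxU : g U (J ξ) = 0 := by rw [hg_symm, Jskew, hJU]; simp [hxV]
  have zJxV : g V (J ξ) = 0 := by rw [hg_symm, Jskew, hJV]; simp [hxU]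
  -- products with J N
  have zJNx : g ξ (J N) = 0 := by rw [hg_symm, Jskew, zJxN, neg_zero]
  have zJNN : g N (J N) = 0 := by
    have h1 := Jskew N N
    have h2 := hg_symm (J N) N
    linarith
  have zJNU : g U (J N) = 0 := by rw [hg_symm, Jskew, hJU]; simp [hNV]
  have zJNV : g V (J N) = 0 := by rw [hg_symm, Jskew, hJV]; simp [hNU]
  -- products with G ξ
  have zGxx : g ξ (G ξ) = 0 := by
    have h1 := hG_skew ξ ξ
    have h2 := hg_symm (G ξ) ξ
    linarith
  have zGxN : g N (G ξ) = 0 := by rw [hg_symm]; exact hGxN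
  have zGxU : g U (G ξ) = 0 := by
    have h1 := hG_skew U ξ
    rw [hGU] at h1
    simp only [map_zero, LinearMap.zero_apply] at h1
    linarith
  have zGxV : g V (G ξ) = 0 := by
    have h1 := hG_skew V ξ
    rw [hGV] at h1
    simp only [map_zero, LinearMap.zero_apply] at h1
    linarith
  -- products with G N
  have zGNx : g ξ (G N) = 0 := by rw [hg_symm, hG_skew, zGxN, neg_zero]
  have zGNN : g N (G N) = 0 := by
    have h1 := hG_skew N N
    have h2 := hg_symm (G N) N
    linarith
  have zGNU : g U (G N) = 0 := by
    have h1 := hG_skew U N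
    rw [hGU] at h1
    simp only [map_zero, LinearMap.zero_apply] at h1
    linarith
  have zGNV : g V (G N) = 0 := by
    have h1 := hG_skew V N
    rw [hGV] at h1
    simp only [map_zero, LinearMap.zero_apply] at h1
    linarith
  -- products with H ξ
  have zHxx : g ξ (H ξ) = 0 := by
    have h1 := Hskew ξ ξ
    have h2 := hg_symm (H ξ) ξ
    linarith
  have zHxN : g N (H ξ) = 0 := by rw [hg_symm]; exact hHxN
  have zHxU : g U (H ξ) = 0 := by
    have h1 := Hskew U ξ
    rw [hHU] at h1
    simp only [map_zero, LinearMap.zero_apply] at h1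
    linarith
  have zHxV : g V (H ξ) = 0 := by
    have h1 := Hskew V ξ
    rw [hHV] at h1
    simp only [map_zero, LinearMap.zero_apply] at h1
    linarith
  -- products with H N
  have zHNx : g ξ (H N) = 0 := by rw [hg_symm, Hskew, zHxN, neg_zero]
  have zHNN : g N (H N) = 0 := by
    have h1 := Hskew N N
    have h2 := hg_symm (H N) N
    linarith
  have zHNU : g U (H N) = 0 := by
    have h1 := Hskew U N
    rw [hHU] at h1
    simp only [map_zero, LinearMap.zero_apply] at h1
    linarith
  have zHNV : g V (H N) = 0 := by
    have h1 := Hskew V N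
    rw [hHV] at h1
    simp only [map_zero, LinearMap.zero_apply] at h1
    linarith
  -- products with J (G ξ) and J (G N)
  have zJGxx : g ξ (J (G ξ)) = 0 := by rw [hJGx]; simp [zHxx]
  have zJGxN : g N (J (G ξ)) = 0 := by rw [hJGx]; simp [zHxN]
  have zJGxU : g U (J (G ξ)) = 0 := by rw [hJGx]; simp [zHxU]
  have zJGxV : g V (J (G ξ)) = 0 := by rw [hJGx]; simp [zHxV]
  have zJGNx : g ξ (J (G N)) = 0 := by rw [hJGN]; simp [zHNx]
  have zJGNN : g N (J (G N)) = 0 := by rw [hJGN]; simp [zHNN]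
  have zJGNU : g U (J (G N)) = 0 := by rw [hJGN]; simp [zHNU]
  have zJGNV : g V (J (G N)) = 0 := by rw [hJGN]; simp [zHNV]
  rw [Fintype.linearIndependent_iff]
  intro c hc
  have h0 : c 0 = 0 := by
    have h := congrArg (fun x => (g x) N) hc
    simpa [Fin.sum_univ_succ, Jskew, hG_skew, Hskew, hH, hGJ, hJJ, hGG, hJU, hJV, hGU, hGV, hxx, hxN, gNx, hNN, hxU, hxV, hNU, hNV, gUx, gUN, gVx, gVN, hUU, gUV, gVU, gVV, zJxx, zJxN, zJxU, zJxV, zJNx, zJNN, zJNU, zJNV, zGxx, zGxN, zGxU, zGxV, zGNx, zGNN, zGNU, zGNV, zHxx, zHxN, zHxU, zHxV, zHNx, zHNN, zHNU, zHNV, zJGxx, zJGxN, zJGxU, zJGxV, zJGNx, zJGNN, zJGNU, zJGNV] using h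
  have h1 : c 1 = 0 := by
    have h := congrArg (fun x => (g x) ξ) hc
    simpa [Fin.sum_univ_succ, Jskew, hG_skew, Hskew, hH, hGJ, hJJ, hGG, hJU, hJV, hGU, hGV, hxx, hxN, gNx, hNN, hxU, hxV, hNU, hNV, gUx, gUN, gVx, gVN, hUU, gUV, gVU, gVV, zJxx, zJxN, zJxU, zJxV, zJNx, zJNN, zJNU, zJNV, zGxx, zGxN, zGxU, zGxV, zGNx, zGNN, zGNU, zGNV, zHxx, zHxN, zHxU, zHxV, zHNx, zHNN, zHNU, zHNV, zJGxx, zJGxN, zJGxU, zJGxV, zJGNx, zJGNN, zJGNU, zJGNV] using h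
  have h2 : c 2 = 0 := by
    have h := congrArg (fun x => (g x) (J N)) hc
    simpa [Fin.sum_univ_succ, Jskew, hG_skew, Hskew, hH, hGJ, hJJ, hGG, hJU, hJV, hGU, hGV, hxx, hxN, gNx, hNN, hxU, hxV, hNU, hNV, gUx, gUN, gVx, gVN, hUU, gUV, gVU, gVV, zJxx, zJxN, zJxU, zJxV, zJNx, zJNN, zJNU, zJNV, zGxx, zGxN, zGxU, zGxV, zGNx, zGNN, zGNU, zGNV, zHxx, zHxN, zHxU, zHxV, zHNx, zHNN, zHNU, zHNV, zJGxx, zJGxN, zJGxU, zJGxV, zJGNx, zJGNN, zJGNU, zJGNV] using h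
  have h3 : c 3 = 0 := by
    have h := congrArg (fun x => (g x) (G N)) hc
    simpa [Fin.sum_univ_succ, Jskew, hG_skew, Hskew, hH, hGJ, hJJ, hGG, hJU, hJV, hGU, hGV, hxx, hxN, gNx, hNN, hxU, hxV, hNU, hNV, gUx, gUN, gVx, gVN, hUU, gUV, gVU, gVV, zJxx, zJxN, zJxU, zJxV, zJNx, zJNN, zJNU, zJNV, zGxx, zGxN, zGxU, zGxV, zGNx, zGNN, zGNU, zGNV, zHxx, zHxN, zHxU, zHxV, zHNx, zHNN, zHNU, zHNV, zJGxx, zJGxN, zJGxU, zJGxV, zJGNx, zJGNN, zJGNU, zJGNV] using h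
  have h4 : c 4 = 0 := by
    have h := congrArg (fun x => (g x) (H N)) hc
    simpa [Fin.sum_univ_succ, Jskew, hG_skew, Hskew, hH, hGJ, hJJ, hGG, hJU, hJV, hGU, hGV, hxx, hxN, gNx, hNN, hxU, hxV, hNU, hNV, gUx, gUN, gVx, gVN, hUU, gUV, gVU, gVV, zJxx, zJxN, zJxU, zJxV, zJNx, zJNN, zJNU, zJNV, zGxx, zGxN, zGxU, zGxV, zGNx, zGNN, zGNU, zGNV, zHxx, zHxN, zHxU, zHxV, zHNx, zHNN, zHNU, zHNV, zJGxx, zJGxN, zJGxU, zJGxV, zJGNx, zJGNN, zJGNU, zJGNV] using h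
  have h5 : c 5 = 0 := by
    have h := congrArg (fun x => (g x) (J ξ)) hc
    simpa [Fin.sum_univ_succ, Jskew, hG_skew, Hskew, hH, hGJ, hJJ, hGG, hJU, hJV, hGU, hGV, hxx, hxN, gNx, hNN, hxU, hxV, hNU, hNV, gUx, gUN, gVx, gVN, hUU, gUV, gVU, gVV, zJxx, zJxN, zJxU, zJxV, zJNx, zJNN, zJNU, zJNV, zGxx, zGxN, zGxU, zGxV, zGNx, zGNN, zGNU, zGNV, zHxx, zHxN, zHxU, zHxV, zHNx, zHNN, zHNU, zHNV, zJGxx, zJGxN, zJGxU, zJGxV, zJGNx, zJGNN, zJGNU, zJGNV] using h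
  have h6 : c 6 = 0 := by
    have h := congrArg (fun x => (g x) (G ξ)) hc
    simpa [Fin.sum_univ_succ, Jskew, hG_skew, Hskew, hH, hGJ, hJJ, hGG, hJU, hJV, hGU, hGV, hxx, hxN, gNx, hNN, hxU, hxV, hNU, hNV, gUx, gUN, gVx, gVN, hUU, gUV, gVU, gVV, zJxx, zJxN, zJxU, zJxV, zJNx, zJNN, zJNU, zJNV, zGxx, zGxN, zGxU, zGxV, zGNx, zGNN, zGNU, zGNV, zHxx, zHxN, zHxU, zHxV, zHNx, zHNN, zHNU, zHNV, zJGxx, zJGxN, zJGxU, zJGxV, zJGNx, zJGNN, zJGNU, zJGNV] using h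
  have h7 : c 7 = 0 := by
    have h := congrArg (fun x => (g x) (H ξ)) hc
    simpa [Fin.sum_univ_succ, Jskew, hG_skew, Hskew, hH, hGJ, hJJ, hGG, hJU, hJV, hGU, hGV, hxx, hxN, gNx, hNN, hxU, hxV, hNU, hNV, gUx, gUN, gVx, gVN, hUU, gUV, gVU, gVV, zJxx, zJxN, zJxU, zJxV, zJNx, zJNN, zJNU, zJNV, zGxx, zGxN, zGxU, zGxV, zGNx, zGNN, zGNU, zGNV, zHxx, zHxN, zHxU, zHxV, zHNx, zHNN, zHNU, zHNV, zJGxx, zJGxN, zJGxU, zJGxV, zJGNx, zJGNN, zJGNU, zJGNV] using h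
  have h8 : c 8 = 0 := by
    have h := congrArg (fun x => (g x) U) hc
    simpa [Fin.sum_univ_succ, Jskew, hG_skew, Hskew, hH, hGJ, hJJ, hGG, hJU, hJV, hGU, hGV, hxx, hxN, gNx, hNN, hxU, hxV, hNU, hNV, gUx, gUN, gVx, gVN, hUU, gUV, gVU, gVV, zJxx, zJxN, zJxU, zJxV, zJNx, zJNN, zJNU, zJNV, zGxx, zGxN, zGxU, zGxV, zGNx, zGNN, zGNU, zGNV, zHxx, zHxN, zHxU, zHxV, zHNx, zHNN, zHNU, zHNV, zJGxx, zJGxN, zJGxU, zJGxV, zJGNx, zJGNN, zJGNU, zJGNV] using h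
  have h9 : c 9 = 0 := by
    have h := congrArg (fun x => (g x) V) hc
    simpa [Fin.sum_univ_succ, Jskew, hG_skew, Hskew, hH, hGJ, hJJ, hGG, hJU, hJV, hGU, hGV, hxx, hxN, gNx, hNN, hxU, hxV, hNU, hNV, gUx, gUN, gVx, gVN, hUU, gUV, gVU, gVV, zJxx, zJxN, zJxU, zJxV, zJNx, zJNN, zJNU, zJNV, zGxx, zGxN, zGxU, zGxV, zGNx, zGNN, zGNU, zGNV, zHxx, zHxN, zHxU, zHxV, zHNx, zHNN, zHNU, zHNV, zJGxx, zJGxN, zJGxU, zJGxV, zJGNx, zJGNN, zJGNU, zJGNV] using h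
  intro i
  fin_cases i
  · exact h0
  · exact h1
  · exact h2
  · exact h3
  · exact h4
  · exact h5
  · exact h6
  · exact h7
  · exact h8
  · exact h9
end

section
/- (Part of Proposition 3.5.) For each a = 1, 2, 3 and every tangent vector X (i.e. ḡ(X, ξ) = 0), the vector φ_aX is again tangent, and φ_a(φ_aX) = -X + u_a(X)U_a + u(X)U + v(X)V. -/
theorem stmt_7 {E : Type*} [AddCommGroup E] [Module ℝ E]
    (g : E →ₗ[ℝ] E →ₗ[ℝ] ℝ)
    (hg_symm : ∀ X Y : E, g X Y = g Y X)
    (J G H : E →ₗ[ℝ] E) (U V : E)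
    (hJJ : ∀ X : E, J (J X) = -X)
    (hJg : ∀ X Y : E, g (J X) (J Y) = g X Y)
    (hG_skew : ∀ X Y : E, g (G X) Y = -(g X (G Y)))
    (hGJ : ∀ X : E, G (J X) = -(J (G X)))
    (hGU : G U = 0)
    (hUU : g U U = 1)
    (hV : V = -(J U))
    (hH : ∀ X : E, H X = G (J X))
    (hGG : ∀ X : E, G (G X) = -X + (g U X) • U + (g V X) • V)
    (ξ N : E)
    (hxx : g ξ ξ = 0) (hNN : g N N = 0) (hxN : g ξ N = 1)
    (hxU : g ξ U = 0) (hxV : g ξ V = 0) (hNU : g N U = 0) (hNV : g N V = 0)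
    (hJxN : g (J ξ) N = 0) (hGxN : g (G ξ) N = 0) (hHxN : g (H ξ) N = 0)
    (Jn : Fin 3 → E →ₗ[ℝ] E)
    (hJn0 : Jn 0 = J) (hJn1 : Jn 1 = G) (hJn2 : Jn 2 = H)
    (φ : Fin 3 → E → E)
    (hphi : ∀ (a : Fin 3) (X : E),
      φ a X = Jn a X + (g X (Jn a ξ)) • N - (g U X) • (Jn a U) - (g V X) • (Jn a V))
    :
    ∀ (a : Fin 3) (X : E), g X ξ = 0 →
      g (φ a X) ξ = 0 ∧
      φ a (φ a X) = -X + (g X (Jn a ξ)) • (Jn a N) + (g U X) • U + (g V X) • V := by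
  -- basic derived facts
  have hJU' : J U = -V := by rw [hV, neg_neg]
  have hJV' : J V = U := by rw [hV, map_neg, hJJ, neg_neg]
  have key : ∀ X : E, J (G X) = -(G (J X)) := fun X => by rw [hGJ X, neg_neg]
  have hGV' : G V = 0 := by rw [hV, map_neg, hGJ, hGU, map_zero, neg_zero, neg_zero]
  have hHU' : H U = 0 := by rw [hH, hJU', map_neg, hGV', neg_zero]
  have hHV' : H V = 0 := by rw [hH, hJV', hGU]
  have hJskew : ∀ X Y : E, g (J X) Y = -(g X (J Y)) := by
    intro X Y
    have h := hJg X (J Y)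
    rw [hJJ, map_neg] at h
    linarith
  have hJGJ : ∀ X : E, J (G (J X)) = G X := fun X => by
    rw [key, hJJ, map_neg, neg_neg]
  have hHskew : ∀ X Y : E, g (H X) Y = -(g X (H Y)) := by
    intro X Y
    rw [hH, hH, hG_skew, hJskew, key, map_neg, neg_neg]
  have hHH : ∀ X : E, H (H X) = -X + (g U X) • U + (g V X) • V := by
    intro X
    rw [hH (H X), hH, hJGJ, hGG]
  -- scalar facts
  have hUxi : g U ξ = 0 := by rw [hg_symm]; exact hxU
  have hVxi : g V ξ = 0 := by rw [hg_symm]; exact hxV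
  have hUN : g U N = 0 := by rw [hg_symm]; exact hNU
  have hVN : g V N = 0 := by rw [hg_symm]; exact hNV
  have hNxi : g N ξ = 1 := by rw [hg_symm]; exact hxN
  have hUJ : ∀ X : E, g U (J X) = g V X := by
    intro X
    have h := hJskew U X
    rw [hJU', map_neg, LinearMap.neg_apply] at h
    linarith
  have hVJ : ∀ X : E, g V (J X) = -(g U X) := by
    intro X
    have h := hJskew V X
    rw [hJV'] at h
    linarith
  have hUG : ∀ X : E, g U (G X) = 0 := by
    intro X
    have h := hG_skew U X
    rw [hGU, map_zero, LinearMap.zero_apply] at h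
    linarith
  have hVG : ∀ X : E, g V (G X) = 0 := by
    intro X
    have h := hG_skew V X
    rw [hGV', map_zero, LinearMap.zero_apply] at h
    linarith
  have hUH : ∀ X : E, g U (H X) = 0 := fun X => by rw [hH]; exact hUG _
  have hVH : ∀ X : E, g V (H X) = 0 := fun X => by rw [hH]; exact hVG _
  have hUJU : g U (J U) = 0 := by
    have h := hJskew U U
    rw [hg_symm (J U) U] at h
    linarith
  have hUV : g U V = 0 := by rw [hV, map_neg, hUJU, neg_zero]
  have hVU : g V U = 0 := by rw [hg_symm]; exact hUV
  have hVV : g V V = 1 := by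
    simp [hV, hJg, hUU]
  have hNJxi : g N (J ξ) = 0 := by rw [hg_symm]; exact hJxN
  have hNGxi : g N (G ξ) = 0 := by rw [hg_symm]; exact hGxN
  have hNHxi : g N (H ξ) = 0 := by rw [hg_symm]; exact hHxN
  have hGGxi : ∀ X : E, g (G X) (G ξ) = g X ξ := by
    intro X
    rw [hG_skew, hGG, hUxi, hVxi]
    simp
  have hHHxi : ∀ X : E, g (H X) (H ξ) = g X ξ := by
    intro X
    rw [hHskew, hHH, hUxi, hVxi]
    simp
  intro a X hX
  fin_cases a <;>
    simp only [Fin.zero_eta, Fin.mk_one, Fin.reduceFinMk, Fin.isValue]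
  · -- a = 0 : J
    simp only [hphi, hJn0, hJU', hJV']
    constructor
    · simp only [map_add, map_sub, map_smul, map_neg, LinearMap.add_apply,
        LinearMap.sub_apply, LinearMap.smul_apply, LinearMap.neg_apply, smul_eq_mul,
        hJskew X ξ, hNxi, hVxi, hUxi]
      ring
    · simp only [map_add, map_sub, map_smul, map_neg, LinearMap.add_apply,
        LinearMap.sub_apply, LinearMap.smul_apply, LinearMap.neg_apply, smul_eq_mul,
        hJJ, hJU', hJV', hJg, hNJxi, hUJ, hVJ, hUN, hVN, hUU, hUV, hVU, hVV, hUxi, hVxi, hX]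
      module
  · -- a = 1 : G
    simp only [hphi, hJn1, hGU, hGV']
    constructor
    · simp only [map_add, map_sub, map_smul, map_neg, map_zero, smul_zero,
        LinearMap.add_apply, LinearMap.sub_apply, LinearMap.smul_apply,
        LinearMap.neg_apply, LinearMap.zero_apply, smul_eq_mul,
        hG_skew X ξ, hNxi, hVxi, hUxi]
      ring
    · simp only [map_add, map_sub, map_smul, map_neg, map_zero, smul_zero, sub_zero,
        LinearMap.add_apply, LinearMap.sub_apply, LinearMap.smul_apply,
        LinearMap.neg_apply, LinearMap.zero_apply, smul_eq_mul,
        hGG, hGGxi, hNGxi, hUG, hVG, hUN, hVN, hUxi, hVxi, hX]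
      module
  · -- a = 2 : H
    simp only [hphi, hJn2, hHU', hHV']
    constructor
    · simp only [map_add, map_sub, map_smul, map_neg, map_zero, smul_zero,
        LinearMap.add_apply, LinearMap.sub_apply, LinearMap.smul_apply,
        LinearMap.neg_apply, LinearMap.zero_apply, smul_eq_mul,
        hHskew X ξ, hNxi, hVxi, hUxi]
      ring
    · simp only [map_add, map_sub, map_smul, map_neg, map_zero, smul_zero, sub_zero,
        LinearMap.add_apply, LinearMap.sub_apply, LinearMap.smul_apply,
        LinearMap.neg_apply, LinearMap.zero_apply, smul_eq_mul,
        hHH, hHHxi, hNHxi, hUH, hVH, hUN, hVN, hUxi, hVxi, hX]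
      module
end

section
/- (Part of Proposition 3.5.) For each a = 1, 2, 3 and every tangent vector X (i.e. ḡ(X, ξ) = 0), one has u_a(φ_aX) = 0, u(φ_aX) = 0 and v(φ_aX) = 0; that is, u_a∘φ_a = 0, u∘φ_a = 0 and v∘φ_a = 0 on tangent vectors. -/
theorem stmt_8 {E : Type*} [AddCommGroup E] [Module ℝ E]
    (g : E →ₗ[ℝ] E →ₗ[ℝ] ℝ)
    (hg_symm : ∀ X Y : E, g X Y = g Y X)
    (J G H : E →ₗ[ℝ] E) (U V : E)
    (hJJ : ∀ X : E, J (J X) = -X)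
    (hJg : ∀ X Y : E, g (J X) (J Y) = g X Y)
    (hG_skew : ∀ X Y : E, g (G X) Y = -(g X (G Y)))
    (hGJ : ∀ X : E, G (J X) = -(J (G X)))
    (hGU : G U = 0)
    (hUU : g U U = 1)
    (hV : V = -(J U))
    (hH : ∀ X : E, H X = G (J X))
    (hGG : ∀ X : E, G (G X) = -X + (g U X) • U + (g V X) • V)
    (ξ N : E)
    (hxx : g ξ ξ = 0) (hNN : g N N = 0) (hxN : g ξ N = 1)
    (hxU : g ξ U = 0) (hxV : g ξ V = 0) (hNU : g N U = 0) (hNV : g N V = 0)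
    (hJxN : g (J ξ) N = 0) (hGxN : g (G ξ) N = 0) (hHxN : g (H ξ) N = 0)
    (Jn : Fin 3 → E →ₗ[ℝ] E)
    (hJn0 : Jn 0 = J) (hJn1 : Jn 1 = G) (hJn2 : Jn 2 = H)
    (φ : Fin 3 → E → E)
    (hphi : ∀ (a : Fin 3) (X : E),
      φ a X = Jn a X + (g X (Jn a ξ)) • N - (g U X) • (Jn a U) - (g V X) • (Jn a V))
    :
    ∀ (a : Fin 3) (X : E), g X ξ = 0 →
      g (φ a X) (Jn a ξ) = 0 ∧ g U (φ a X) = 0 ∧ g V (φ a X) = 0 := by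

  have hJskew : ∀ X Y : E, g (J X) Y = -(g X (J Y)) := by
    intro X Y
    have h := hJg X (J Y)
    rw [hJJ, map_neg] at h
    linarith
  have hJU : J U = -V := by rw [hV, neg_neg]
  have hJV : J V = U := by rw [hV, map_neg, hJJ, neg_neg]
  have hGV : G V = 0 := by
    rw [hV, map_neg, hGJ, hGU, map_zero, neg_zero, neg_zero]
  have hHU : H U = 0 := by rw [hH, hJU, map_neg, hGV, neg_zero]
  have hHV : H V = 0 := by rw [hH, hJV, hGU]
  have hHskew : ∀ X Y : E, g (H X) Y = -(g X (H Y)) := by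
    intro X Y
    have h3 : J (G Y) = -(H Y) := by rw [hH, hGJ, neg_neg]
    have h1 : g (H X) Y = -(g (J X) (G Y)) := by rw [hH, hG_skew]
    rw [h1, hJskew, h3, map_neg, neg_neg]
  have gUJU : g U (J U) = 0 := by
    have h1 := hJskew U U
    have h2 := hg_symm (J U) U
    linarith
  have gUV0 : g U V = 0 := by rw [hV, map_neg, gUJU, neg_zero]
  have gVU0 : g V U = 0 := (hg_symm V U).trans gUV0
  have gVV1 : g V V = 1 := by
    simp only [hV, map_neg, LinearMap.neg_apply, neg_neg, hJg, hUU]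
  have gUxi : g U ξ = 0 := (hg_symm U ξ).trans hxU
  have gVxi : g V ξ = 0 := (hg_symm V ξ).trans hxV
  have gUN : g U N = 0 := (hg_symm U N).trans hNU
  have gVN : g V N = 0 := (hg_symm V N).trans hNV
  have gNJxi : g N (J ξ) = 0 := (hg_symm N (J ξ)).trans hJxN
  have gNGxi : g N (G ξ) = 0 := (hg_symm N (G ξ)).trans hGxN
  have gNHxi : g N (H ξ) = 0 := (hg_symm N (H ξ)).trans hHxN
  have gUJxi : g U (J ξ) = 0 := by
    have h := hJskew U ξ
    rw [hJU, map_neg, LinearMap.neg_apply, gVxi] at h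
    linarith
  have gVJxi : g V (J ξ) = 0 := by
    have h := hJskew V ξ
    rw [hJV, gUxi] at h
    linarith
  have hGGxi : G (G ξ) = -ξ := by
    rw [hGG, gUxi, gVxi, zero_smul, zero_smul, add_zero, add_zero]
  have hGGJxi : G (G (J ξ)) = -(J ξ) := by
    rw [hGG, gUJxi, gVJxi, zero_smul, zero_smul, add_zero, add_zero]
  have gUJV : g U (J V) = 1 := by rw [hJV]; exact hUU
  have gVJU : g V (J U) = -1 := by rw [hJU, map_neg, gVV1]
  have gVJV : g V (J V) = 0 := by rw [hJV]; exact gVU0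
  intro a X hX
  have hJXJxi : g (J X) (J ξ) = 0 := by rw [hJg]; exact hX
  have hGXGxi : g (G X) (G ξ) = 0 := by
    rw [hG_skew, hGGxi, map_neg, hX, neg_zero, neg_zero]
  have hHXHxi : g (H X) (H ξ) = 0 := by
    have : g (H X) (H ξ) = -(g (J X) (G (G (J ξ)))) := by
      rw [hH, hH, hG_skew]
    rw [this, hGGJxi, map_neg, hJXJxi, neg_zero, neg_zero]
  have gUJX : g U (J X) = g V X := by
    have h := hJskew U X
    rw [hJU, map_neg, LinearMap.neg_apply] at h
    linarith
  have gVJX : g V (J X) = -(g U X) := by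
    have h := hJskew V X
    rw [hJV] at h
    linarith
  have gUGX : g U (G X) = 0 := by
    have h := hG_skew U X
    rw [hGU, map_zero, LinearMap.zero_apply] at h
    linarith
  have gVGX : g V (G X) = 0 := by
    have h := hG_skew V X
    rw [hGV, map_zero, LinearMap.zero_apply] at h
    linarith
  have gUHX : g U (H X) = 0 := by
    have h := hHskew U X
    rw [hHU, map_zero, LinearMap.zero_apply] at h
    linarith
  have gVHX : g V (H X) = 0 := by
    have h := hHskew V X
    rw [hHV, map_zero, LinearMap.zero_apply] at h
    linarith
  have main : ∀ (b : Fin 3) (K : E →ₗ[ℝ] E), Jn b = K →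
      g (K X) (K ξ) = 0 → g N (K ξ) = 0 →
      g (K U) (K ξ) = 0 → g (K V) (K ξ) = 0 →
      g U (K X) - g U X * g U (K U) - g V X * g U (K V) = 0 →
      g V (K X) - g U X * g V (K U) - g V X * g V (K V) = 0 →
      (g (φ b X) (Jn b ξ) = 0 ∧ g U (φ b X) = 0 ∧ g V (φ b X) = 0) := by
    intro b K hK hK1 hK2 hK3 hK4 hK5 hK6
    rw [hphi, hK]
    simp only [map_add, map_sub, map_smul, LinearMap.add_apply, LinearMap.sub_apply,
      LinearMap.smul_apply, smul_eq_mul]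
    refine ⟨?_, ?_, ?_⟩
    · rw [hK1, hK2, hK3, hK4]; ring
    · rw [gUN, mul_zero, add_zero]; exact hK5
    · rw [gVN, mul_zero, add_zero]; exact hK6
  fin_cases a
  · exact main 0 J hJn0 hJXJxi gNJxi
      (by rw [hJg]; exact gUxi) (by rw [hJg]; exact gVxi)
      (by rw [gUJX, gUJU, gUJV]; ring) (by rw [gVJX, gVJU, gVJV]; ring)
  · exact main 1 G hJn1 hGXGxi gNGxi
      (by simp [hGU]) (by simp [hGV])
      (by simp [gUGX, hGU, hGV]) (by simp [gVGX, hGU, hGV])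
  · exact main 2 H hJn2 hHXHxi gNHxi
      (by simp [hHU]) (by simp [hHV])
      (by simp [gUHX, hHU, hHV]) (by simp [gVHX, hHU, hHV])
end

section
/- (Part of Proposition 3.5.) For each a = 1, 2, 3 one has φ_aU_a = 0, φ_aU = 0 and φ_aV = 0. -/
theorem stmt_9 {E : Type*} [AddCommGroup E] [Module ℝ E]
    (g : E →ₗ[ℝ] E →ₗ[ℝ] ℝ)
    (hg_symm : ∀ X Y : E, g X Y = g Y X)
    (J G H : E →ₗ[ℝ] E) (U V : E)
    (hJJ : ∀ X : E, J (J X) = -X)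
    (hJg : ∀ X Y : E, g (J X) (J Y) = g X Y)
    (hG_skew : ∀ X Y : E, g (G X) Y = -(g X (G Y)))
    (hGJ : ∀ X : E, G (J X) = -(J (G X)))
    (hGU : G U = 0)
    (hUU : g U U = 1)
    (hV : V = -(J U))
    (hH : ∀ X : E, H X = G (J X))
    (hGG : ∀ X : E, G (G X) = -X + (g U X) • U + (g V X) • V)
    (ξ N : E)
    (hxx : g ξ ξ = 0) (hNN : g N N = 0) (hxN : g ξ N = 1)
    (hxU : g ξ U = 0) (hxV : g ξ V = 0) (hNU : g N U = 0) (hNV : g N V = 0)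
    (hJxN : g (J ξ) N = 0) (hGxN : g (G ξ) N = 0) (hHxN : g (H ξ) N = 0)
    (Jn : Fin 3 → E →ₗ[ℝ] E)
    (hJn0 : Jn 0 = J) (hJn1 : Jn 1 = G) (hJn2 : Jn 2 = H)
    (φ : Fin 3 → E → E)
    (hphi : ∀ (a : Fin 3) (X : E),
      φ a X = Jn a X + (g X (Jn a ξ)) • N - (g U X) • (Jn a U) - (g V X) • (Jn a V))
    :
    ∀ a : Fin 3, φ a (Jn a N) = 0 ∧ φ a U = 0 ∧ φ a V = 0 := by
  have hsk : ∀ X Y : E, g (J X) Y = -(g X (J Y)) := by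
    intro X Y
    have h := hJg X (J Y)
    rw [hJJ Y, map_neg] at h
    linarith
  have hJU : J U = -V := by rw [hV, neg_neg]
  have hJV : J V = U := by rw [hV, map_neg, hJJ, neg_neg]
  have hGV : G V = 0 := by rw [hV, map_neg, hGJ, hGU, map_zero, neg_zero, neg_zero]
  have hHU : H U = 0 := by rw [hH, hJU, map_neg, hGV, neg_zero]
  have hHV : H V = 0 := by rw [hH, hJV, hGU]
  have hHsk : ∀ X Y : E, g (H X) Y = -(g X (H Y)) := by
    intro X Y
    have h1 : g (H X) Y = -(g (J X) (G Y)) := by rw [hH, hG_skew]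
    have h2 : g (J X) (G Y) = -(g X (J (G Y))) := hsk X (G Y)
    have h3 : J (G Y) = -(H Y) := by
      rw [hH]; have := hGJ Y; rw [this, neg_neg]
    rw [h1, h2, h3, map_neg]
    ring
  have hUV : g U V = 0 := by
    have h := hsk U U
    have h2 : g (J U) U = g U (J U) := hg_symm _ _
    have h3 : g U (J U) = 0 := by linarith
    rw [hV, map_neg, h3, neg_zero]
  have hVV : g V V = 1 := by
    rw [hV]
    simp only [map_neg, LinearMap.neg_apply, neg_neg]
    rw [hJg, hUU]
  have hGGx : G (G ξ) = -ξ := by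
    rw [hGG, hg_symm U ξ, hxU, hg_symm V ξ, hxV]; simp
  have hGGN : G (G N) = -N := by
    rw [hGG, hg_symm U N, hNU, hg_symm V N, hNV]; simp
  have hHHx : H (H ξ) = -ξ := by
    rw [hH ξ, hH, hGJ ξ, map_neg, hJJ, neg_neg, hGGx]
  have hHHN : H (H N) = -N := by
    rw [hH N, hH, hGJ N, map_neg, hJJ, neg_neg, hGGN]
  -- scalar facts for a = 0
  have s1 : g (J N) (J ξ) = 1 := by rw [hJg, hg_symm, hxN]
  have s2 : g U (J N) = 0 := by
    have h := hsk U N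
    rw [hJU] at h
    simp only [map_neg, LinearMap.neg_apply] at h
    rw [hg_symm V N, hNV] at h
    linarith
  have s3 : g V (J N) = 0 := by
    have h := hsk V N
    rw [hJV, hg_symm U N, hNU] at h
    linarith
  have s4 : g U (J ξ) = 0 := by
    have h := hsk U ξ
    rw [hJU] at h
    simp only [map_neg, LinearMap.neg_apply] at h
    rw [hg_symm V ξ, hxV] at h
    linarith
  have s5 : g V (J ξ) = 0 := by
    have h := hsk V ξ
    rw [hJV, hg_symm U ξ, hxU] at h
    linarith
  -- scalar facts for a = 1
  have t1 : g (G N) (G ξ) = 1 := by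
    have h := hG_skew N (G ξ)
    rw [hGGx] at h
    simp only [map_neg, LinearMap.neg_apply, neg_neg] at h
    rw [hg_symm N ξ, hxN] at h
    exact h
  have t2 : g U (G N) = 0 := by
    have h := hG_skew U N
    rw [hGU] at h; simp at h; linarith
  have t3 : g V (G N) = 0 := by
    have h := hG_skew V N
    rw [hGV] at h; simp at h; linarith
  have t4 : g U (G ξ) = 0 := by
    have h := hG_skew U ξ
    rw [hGU] at h; simp at h; linarith
  have t5 : g V (G ξ) = 0 := by
    have h := hG_skew V ξ
    rw [hGV] at h; simp at h; linarith
  -- scalar facts for a = 2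
  have w1 : g (H N) (H ξ) = 1 := by
    have h := hHsk N (H ξ)
    rw [hHHx] at h
    simp only [map_neg, LinearMap.neg_apply, neg_neg] at h
    rw [hg_symm N ξ, hxN] at h
    exact h
  have w2 : g U (H N) = 0 := by
    have h := hHsk U N
    rw [hHU] at h; simp at h; linarith
  have w3 : g V (H N) = 0 := by
    have h := hHsk V N
    rw [hHV] at h; simp at h; linarith
  have w4 : g U (H ξ) = 0 := by
    have h := hHsk U ξ
    rw [hHU] at h; simp at h; linarith
  have w5 : g V (H ξ) = 0 := by
    have h := hHsk V ξ
    rw [hHV] at h; simp at h; linarith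
  have P0 : φ 0 (Jn 0 N) = 0 ∧ φ 0 U = 0 ∧ φ 0 V = 0 := by
    refine ⟨?_, ?_, ?_⟩
    · rw [hphi]; simp only [hJn0]; rw [hJJ, s1, s2, s3]; simp
    · rw [hphi]; simp only [hJn0]; rw [s4, hUU, hg_symm V U, hUV]; simp
    · rw [hphi]; simp only [hJn0]; rw [s5, hUV, hVV]; simp
  have P1 : φ 1 (Jn 1 N) = 0 ∧ φ 1 U = 0 ∧ φ 1 V = 0 := by
    refine ⟨?_, ?_, ?_⟩
    · rw [hphi]; simp only [hJn1]; rw [hGGN, t1, t2, t3, hGU, hGV]; simp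
    · rw [hphi]; simp only [hJn1]; rw [t4, hGU, hGV]; simp
    · rw [hphi]; simp only [hJn1]; rw [t5, hGU, hGV]; simp
  have P2 : φ 2 (Jn 2 N) = 0 ∧ φ 2 U = 0 ∧ φ 2 V = 0 := by
    refine ⟨?_, ?_, ?_⟩
    · rw [hphi]; simp only [hJn2]; rw [hHHN, w1, w2, w3, hHU, hHV]; simp
    · rw [hphi]; simp only [hJn2]; rw [w4, hHU, hHV]; simp
    · rw [hphi]; simp only [hJn2]; rw [w5, hHU, hHV]; simp
  intro a
  fin_cases a
  · exact P0
  · exact P1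
  · exact P2
end

section
/- (Part of Proposition 3.5: action of φ_a on the vectors U_b, with precise signs.) One has φ₂U₁ = U₃, φ₃U₂ = U₁, φ₁U₃ = U₂, and φ₁U₂ = -U₃, φ₂U₃ = -U₁, φ₃U₁ = -U₂. -/
theorem stmt_10 {E : Type*} [AddCommGroup E] [Module ℝ E]
    (g : E →ₗ[ℝ] E →ₗ[ℝ] ℝ)
    (hg_symm : ∀ X Y : E, g X Y = g Y X)
    (J G H : E →ₗ[ℝ] E) (U V : E)
    (hJJ : ∀ X : E, J (J X) = -X)
    (hJg : ∀ X Y : E, g (J X) (J Y) = g X Y)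
    (hG_skew : ∀ X Y : E, g (G X) Y = -(g X (G Y)))
    (hGJ : ∀ X : E, G (J X) = -(J (G X)))
    (hGU : G U = 0)
    (hUU : g U U = 1)
    (hV : V = -(J U))
    (hH : ∀ X : E, H X = G (J X))
    (hGG : ∀ X : E, G (G X) = -X + (g U X) • U + (g V X) • V)
    (ξ N : E)
    (hxx : g ξ ξ = 0) (hNN : g N N = 0) (hxN : g ξ N = 1)
    (hxU : g ξ U = 0) (hxV : g ξ V = 0) (hNU : g N U = 0) (hNV : g N V = 0)
    (hJxN : g (J ξ) N = 0) (hGxN : g (G ξ) N = 0) (hHxN : g (H ξ) N = 0)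
    (Jn : Fin 3 → E →ₗ[ℝ] E)
    (hJn0 : Jn 0 = J) (hJn1 : Jn 1 = G) (hJn2 : Jn 2 = H)
    (φ : Fin 3 → E → E)
    (hphi : ∀ (a : Fin 3) (X : E),
      φ a X = Jn a X + (g X (Jn a ξ)) • N - (g U X) • (Jn a U) - (g V X) • (Jn a V))
    :
    φ 1 (Jn 0 N) = Jn 2 N ∧ φ 2 (Jn 1 N) = Jn 0 N ∧ φ 0 (Jn 2 N) = Jn 1 N ∧
    φ 0 (Jn 1 N) = -(Jn 2 N) ∧ φ 1 (Jn 2 N) = -(Jn 0 N) ∧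
    φ 2 (Jn 0 N) = -(Jn 1 N) := by

  have hJG : ∀ X : E, J (G X) = -(G (J X)) := fun X => by rw [hGJ, neg_neg]
  have hGV : G V = 0 := by rw [hV, map_neg, hGJ, hGU, map_zero, neg_zero, neg_zero]
  have hJU : J U = -V := by rw [hV, neg_neg]
  have hJV : J V = U := by rw [hV, map_neg, hJJ, neg_neg]
  have hHU : H U = 0 := by rw [hH, hJU, map_neg, hGV, neg_zero]
  have hHV : H V = 0 := by rw [hH, hJV, hGU]
  have hHskew : ∀ X Y : E, g (H X) Y = -(g X (H Y)) := fun X Y => by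
    calc g (H X) Y = -(g (J X) (G Y)) := by rw [hH, hG_skew]
    _ = -(g (J (J X)) (J (G Y))) := by rw [hJg]
    _ = -(g X (H Y)) := by rw [hJJ, hJG, hH]; simp
  have gUJN : g U (J N) = 0 := by
    have := hJg U (J N)
    rw [hJU, hJJ] at this
    simp only [map_neg, LinearMap.neg_apply, neg_neg] at this
    rw [← this, hg_symm]; exact hNV
  have gVJN : g V (J N) = 0 := by
    have := hJg V (J N)
    rw [hJV, hJJ] at this
    simp only [map_neg] at this
    rw [← this, hg_symm]; simp [hNU]
  have gJNx : g (J N) ξ = 0 := by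
    have := hJg (J N) ξ
    rw [hJJ] at this
    simp only [map_neg, LinearMap.neg_apply] at this
    rw [← this, hg_symm]; simp [hJxN]
  have gGNx : g (G N) ξ = 0 := by
    have := hG_skew ξ N
    rw [hGxN] at this
    rw [hg_symm]; linarith
  have gHNx : g (H N) ξ = 0 := by
    have := hHskew N ξ
    rw [this, hg_symm, hHxN, neg_zero]
  have hGJN : G (J N) = H N := (hH N).symm
  have hHGN : H (G N) = J N := by
    rw [hH, hJG, map_neg, hGG, gUJN, gVJN]
    simp
  have hJHN : J (H N) = G N := by
    rw [hH, hJG, hJJ]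
    simp
  have hGHN : G (H N) = -(J N) := by
    rw [hH, hGG, gUJN, gVJN]
    simp
  have hHJN : H (J N) = -(G N) := by
    rw [hH, hJJ, map_neg]
  have gUGN : g U (G N) = 0 := by
    have := hG_skew U N
    rw [hGU] at this
    simp at this
    linarith
  have gVGN : g V (G N) = 0 := by
    have := hG_skew V N
    rw [hGV] at this
    simp at this
    linarith
  have gUHN : g U (H N) = 0 := by
    have := hHskew U N
    rw [hHU] at this
    simp at this
    linarith
  have gVHN : g V (H N) = 0 := by
    have := hHskew V N
    rw [hHV] at this
    simp at this
    linarith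
  have s1 : g (J N) (G ξ) = 0 := by
    have := hG_skew (J N) ξ
    rw [← hH, gHNx] at this
    linarith
  have s2 : g (G N) (H ξ) = 0 := by
    rw [hg_symm, hHskew, hHGN, hg_symm, gJNx, neg_zero]
  have s3 : g (H N) (J ξ) = 0 := by
    have := hJg (H N) (J ξ)
    rw [hJHN, hJJ] at this
    simp only [map_neg] at this
    rw [← this, gGNx, neg_zero]
  have s4 : g (G N) (J ξ) = 0 := by
    have := hJg (G N) (J ξ)
    rw [hJG, hJJ] at this
    simp only [map_neg, LinearMap.neg_apply, neg_neg] at this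
    rw [← this, ← hH, gHNx]
  have s5 : g (H N) (G ξ) = 0 := by
    have := hG_skew (H N) ξ
    rw [hGHN] at this
    simp only [map_neg, LinearMap.neg_apply, neg_inj] at this
    rw [hg_symm] at this
    rw [← this, hg_symm]
    exact gJNx
  have s6 : g (J N) (H ξ) = 0 := by
    rw [hg_symm, hHskew, hHJN]
    simp only [map_neg, neg_neg]
    rw [hg_symm, gGNx]
  refine ⟨?_, ?_, ?_, ?_, ?_, ?_⟩
  · rw [hphi, hJn0, hJn1, hJn2]
    rw [s1, hGU, hGV, ← hH]
    simp
  · rw [hphi, hJn0, hJn1, hJn2]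
    rw [s2, hHU, hHV, hHGN]
    simp
  · rw [hphi, hJn0, hJn1, hJn2]
    rw [s3, gUHN, gVHN, hJHN]
    simp
  · rw [hphi, hJn0, hJn1, hJn2]
    rw [s4, gUGN, gVGN]
    have : J (G N) = -(H N) := by rw [hJG, hH]
    rw [this]; simp
  · rw [hphi, hJn0, hJn1, hJn2]
    rw [s5, hGU, hGV, hGHN]
    simp
  · rw [hphi, hJn0, hJn1, hJn2]
    rw [s6, hHU, hHV, hHJN]
    simp
end

section
/- (Part of Proposition 3.5: composition of the 1-forms u_a with φ_b, with precise signs.) For every tangent vector X (i.e. ḡ(X, ξ) = 0): u₂(φ₁X) = u₃(X), u₃(φ₂X) = u₁(X) and u₁(φ₃X) = u₂(X). -/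
theorem stmt_11 {E : Type*} [AddCommGroup E] [Module ℝ E]
    (g : E →ₗ[ℝ] E →ₗ[ℝ] ℝ)
    (hg_symm : ∀ X Y : E, g X Y = g Y X)
    (J G H : E →ₗ[ℝ] E) (U V : E)
    (hJJ : ∀ X : E, J (J X) = -X)
    (hJg : ∀ X Y : E, g (J X) (J Y) = g X Y)
    (hG_skew : ∀ X Y : E, g (G X) Y = -(g X (G Y)))
    (hGJ : ∀ X : E, G (J X) = -(J (G X)))
    (hGU : G U = 0)
    (hUU : g U U = 1)
    (hV : V = -(J U))
    (hH : ∀ X : E, H X = G (J X))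
    (hGG : ∀ X : E, G (G X) = -X + (g U X) • U + (g V X) • V)
    (ξ N : E)
    (hxx : g ξ ξ = 0) (hNN : g N N = 0) (hxN : g ξ N = 1)
    (hxU : g ξ U = 0) (hxV : g ξ V = 0) (hNU : g N U = 0) (hNV : g N V = 0)
    (hJxN : g (J ξ) N = 0) (hGxN : g (G ξ) N = 0) (hHxN : g (H ξ) N = 0)
    (Jn : Fin 3 → E →ₗ[ℝ] E)
    (hJn0 : Jn 0 = J) (hJn1 : Jn 1 = G) (hJn2 : Jn 2 = H)
    (φ : Fin 3 → E → E)
    (hphi : ∀ (a : Fin 3) (X : E),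
      φ a X = Jn a X + (g X (Jn a ξ)) • N - (g U X) • (Jn a U) - (g V X) • (Jn a V))
    :
    ∀ X : E, g X ξ = 0 →
      g (φ 0 X) (Jn 1 ξ) = g X (Jn 2 ξ) ∧
      g (φ 1 X) (Jn 2 ξ) = g X (Jn 0 ξ) ∧
      g (φ 2 X) (Jn 0 ξ) = g X (Jn 1 ξ) := by
  intro X hX
  -- J is skew
  have skewJ : ∀ A B : E, g (J A) B = -(g A (J B)) := by
    intro A B
    have h := hJg A (J B)
    rw [hJJ, map_neg] at h
    linarith
  have hJGx : J (G ξ) = -(G (J ξ)) := by rw [hGJ, neg_neg]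
  have hGJU : G (J U) = 0 := by rw [hGJ, hGU, map_zero, neg_zero]
  have hHU : H U = 0 := by rw [hH, hGJU]
  have hHV : H V = 0 := by
    rw [hV, map_neg, hH, hJJ, map_neg, hGU, neg_zero, neg_zero]
  have hGV : G V = 0 := by rw [hV, map_neg, hGJU, neg_zero]
  -- value facts
  have hUGx : g U (G ξ) = 0 := by
    have h := hG_skew U ξ
    rw [hGU, map_zero, LinearMap.zero_apply] at h
    linarith
  have hUGJx : g U (G (J ξ)) = 0 := by
    have h := hG_skew U (J ξ)
    rw [hGU, map_zero, LinearMap.zero_apply] at h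
    linarith
  have hJUx : g (J U) ξ = 0 := by
    have hJU : J U = -V := by rw [hV, neg_neg]
    rw [hJU, map_neg, LinearMap.neg_apply, hg_symm, hxV, neg_zero]
  have hUJx : g U (J ξ) = 0 := by
    have h := skewJ U ξ
    rw [hJUx] at h
    linarith
  -- goal 1 pieces
  constructor
  · rw [hphi, hJn0, hJn1, hJn2]
    simp only [map_add, map_sub, map_smul, LinearMap.add_apply, LinearMap.sub_apply,
      LinearMap.smul_apply, smul_eq_mul]
    have e1 : g (J X) (G ξ) = g X (H ξ) := by
      rw [skewJ, hJGx, map_neg, neg_neg, hH]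
    have e2 : g N (G ξ) = 0 := by rw [hg_symm]; exact hGxN
    have e3 : g (J U) (G ξ) = 0 := by
      rw [skewJ, hJGx, map_neg, hUGJx]; ring
    have e4 : g (J V) (G ξ) = 0 := by
      rw [hV, map_neg, hJJ, neg_neg, hUGx]
    rw [e1, e2, e3, e4]; ring
  constructor
  · rw [hphi, hJn1, hJn2, hJn0]
    simp only [map_add, map_sub, map_smul, LinearMap.add_apply, LinearMap.sub_apply,
      LinearMap.smul_apply, smul_eq_mul]
    have e1 : g (G X) (H ξ) = g X (J ξ) := by
      rw [hG_skew, hH, hGG]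
      have hUJx' : g U (J ξ) = 0 := hUJx
      have hVJx : g V (J ξ) = 0 := by
        rw [hV, map_neg, LinearMap.neg_apply, hJg, hg_symm, hxU, neg_zero]
      rw [hUJx', hVJx]
      simp
    have e2 : g N (H ξ) = 0 := by rw [hg_symm]; exact hHxN
    rw [e1, e2, hGU, hGV]
    simp
  · rw [hphi, hJn2, hJn0, hJn1]
    simp only [map_add, map_sub, map_smul, LinearMap.add_apply, LinearMap.sub_apply,
      LinearMap.smul_apply, smul_eq_mul]
    have skewH : ∀ A B : E, g (H A) B = -(g A (H B)) := by
      intro A B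
      rw [hH, hG_skew, skewJ, hH, hGJ, map_neg]
    have e1 : g (H X) (J ξ) = g X (G ξ) := by
      rw [skewH, hH, hJJ, map_neg, map_neg, neg_neg]
    have e2 : g N (J ξ) = 0 := by rw [hg_symm]; exact hJxN
    rw [e1, e2, hHU, hHV]
    simp
end

section
/- (Part of Proposition 3.5: quaternionic-type composition law for the φ_a, with precise signs.) For every tangent vector X (i.e. ḡ(X, ξ) = 0): φ₂(φ₁X) = φ₃X + u₁(X)U₂, φ₃(φ₂X) = φ₁X + u₂(X)U₃, and φ₁(φ₃X) = φ₂X + u₃(X)U₁. -/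
theorem stmt_12 {E : Type*} [AddCommGroup E] [Module ℝ E]
    (g : E →ₗ[ℝ] E →ₗ[ℝ] ℝ)
    (hg_symm : ∀ X Y : E, g X Y = g Y X)
    (J G H : E →ₗ[ℝ] E) (U V : E)
    (hJJ : ∀ X : E, J (J X) = -X)
    (hJg : ∀ X Y : E, g (J X) (J Y) = g X Y)
    (hG_skew : ∀ X Y : E, g (G X) Y = -(g X (G Y)))
    (hGJ : ∀ X : E, G (J X) = -(J (G X)))
    (hGU : G U = 0)
    (hUU : g U U = 1)
    (hV : V = -(J U))
    (hH : ∀ X : E, H X = G (J X))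
    (hGG : ∀ X : E, G (G X) = -X + (g U X) • U + (g V X) • V)
    (ξ N : E)
    (hxx : g ξ ξ = 0) (hNN : g N N = 0) (hxN : g ξ N = 1)
    (hxU : g ξ U = 0) (hxV : g ξ V = 0) (hNU : g N U = 0) (hNV : g N V = 0)
    (hJxN : g (J ξ) N = 0) (hGxN : g (G ξ) N = 0) (hHxN : g (H ξ) N = 0)
    (Jn : Fin 3 → E →ₗ[ℝ] E)
    (hJn0 : Jn 0 = J) (hJn1 : Jn 1 = G) (hJn2 : Jn 2 = H)
    (φ : Fin 3 → E → E)
    (hphi : ∀ (a : Fin 3) (X : E),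
      φ a X = Jn a X + (g X (Jn a ξ)) • N - (g U X) • (Jn a U) - (g V X) • (Jn a V))
    :
    ∀ X : E, g X ξ = 0 →
      φ 1 (φ 0 X) = φ 2 X + (g X (Jn 0 ξ)) • (Jn 1 N) ∧
      φ 2 (φ 1 X) = φ 0 X + (g X (Jn 1 ξ)) • (Jn 2 N) ∧
      φ 0 (φ 2 X) = φ 1 X + (g X (Jn 2 ξ)) • (Jn 0 N) := by
  intro X hX
  -- basic derived identities
  have hJU : J U = -V := by rw [hV, neg_neg]
  have hJV : J V = U := by rw [hV, map_neg, hJJ, neg_neg]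
  have hGJU : G (J U) = 0 := by rw [hGJ, hGU, map_zero, neg_zero]
  have hGV : G V = 0 := by rw [hV, map_neg, hGJU, neg_zero]
  have hHU : H U = 0 := by rw [hH, hGJU]
  have hHV : H V = 0 := by rw [hH, hJV, hGU]
  have hJGx : J (G ξ) = -(G (J ξ)) := by rw [hGJ, neg_neg]
  have hJH : ∀ Y : E, J (H Y) = G Y := by
    intro Y; rw [hH, hGJ, map_neg, hJJ, neg_neg]
  have hUJX : ∀ Y : E, g U (J Y) = g V Y := by
    intro Y
    calc g U (J Y) = g (J U) (J (J Y)) := (hJg U (J Y)).symm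
    _ = g V Y := by simp only [hJU, hJJ, map_neg, LinearMap.neg_apply, neg_neg]
  have hVJX : ∀ Y : E, g V (J Y) = -(g U Y) := by
    intro Y
    calc g V (J Y) = g (J V) (J (J Y)) := (hJg V (J Y)).symm
    _ = -(g U Y) := by simp only [hJV, hJJ, map_neg]
  have hUN : g U N = 0 := by rw [hg_symm]; exact hNU
  have hVN : g V N = 0 := by rw [hg_symm]; exact hNV
  have hNGx : g N (G ξ) = 0 := by rw [hg_symm]; exact hGxN
  have hNJx : g N (J ξ) = 0 := by rw [hg_symm]; exact hJxN
  have hNHx : g N (H ξ) = 0 := by rw [hg_symm]; exact hHxN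
  have hUGx : g U (G ξ) = 0 := by
    have h := hG_skew U ξ
    rw [hGU] at h
    simp only [map_zero, LinearMap.zero_apply] at h
    linarith
  have hVGx : g V (G ξ) = 0 := by
    have h := hG_skew V ξ
    rw [hGV] at h
    simp only [map_zero, LinearMap.zero_apply] at h
    linarith
  have hUx : g U ξ = 0 := by rw [hg_symm]; exact hxU
  have hVx : g V ξ = 0 := by rw [hg_symm]; exact hxV
  have hJXGx : ∀ Y : E, g (J Y) (G ξ) = g Y (H ξ) := by
    intro Y
    calc g (J Y) (G ξ) = g (J (J Y)) (J (G ξ)) := (hJg _ _).symm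
    _ = g Y (H ξ) := by
        simp only [hJJ, hJGx, hH, map_neg, LinearMap.neg_apply, neg_neg]
  have hGXHx : ∀ Y : E, g (G Y) (H ξ) = g Y (J ξ) := by
    intro Y
    rw [hH, hG_skew, hGG, hUJX, hVJX, hVx, hUx]
    simp only [neg_zero, zero_smul, add_zero, map_neg, neg_neg]
  have hHXJx : ∀ Y : E, g (H Y) (J ξ) = g Y (G ξ) := by
    intro Y
    rw [hH, hG_skew]
    have : g (J Y) (G (J ξ)) = -(g Y (G ξ)) := by
      calc g (J Y) (G (J ξ)) = g (J (J Y)) (J (G (J ξ))) := (hJg _ _).symm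
      _ = -(g Y (G ξ)) := by
          simp only [hGJ, hJJ, map_neg, LinearMap.neg_apply, neg_neg]
    rw [this, neg_neg]
  have hUHX : ∀ Y : E, g U (H Y) = 0 := by
    intro Y
    rw [hg_symm, hH, hG_skew, hGU, map_zero, neg_zero]
  have hVHX : ∀ Y : E, g V (H Y) = 0 := by
    intro Y
    rw [hg_symm, hH, hG_skew, hGV, map_zero, neg_zero]
  have hHG : ∀ Y : E, H (G Y) = J Y - (g V Y) • U + (g U Y) • V := by
    intro Y
    have h1 : J (G Y) = -(G (J Y)) := by rw [hGJ, neg_neg]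
    rw [hH, h1, map_neg, hGG, hUJX, hVJX]
    module
  refine ⟨?_, ?_, ?_⟩
  · -- φ 1 (φ 0 X) = φ 2 X + u₁(X) • G N
    simp only [hphi, hJn0, hJn1, hJn2, map_add, map_sub, map_smul,
      LinearMap.add_apply, LinearMap.sub_apply, LinearMap.smul_apply,
      smul_eq_mul, hJU, hJV, hGU, hGV, hGJU, hHU, hHV, map_neg,
      LinearMap.neg_apply, hJXGx, hNGx, hUGx, hVGx, hH, neg_zero,
      smul_zero, mul_zero, zero_smul, add_zero, sub_zero, zero_add, neg_neg]
    module
  · -- φ 2 (φ 1 X) = φ 0 X + u₂(X) • H N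
    simp only [hphi, hJn0, hJn1, hJn2, map_add, map_sub, map_smul,
      LinearMap.add_apply, LinearMap.sub_apply, LinearMap.smul_apply,
      smul_eq_mul, hGU, hGV, hHU, hHV, hHG, hGXHx, hNHx, map_neg,
      LinearMap.neg_apply, hJU, hJV, neg_zero,
      smul_zero, mul_zero, zero_smul, add_zero, sub_zero, zero_add, neg_neg]
    module
  · -- φ 0 (φ 2 X) = φ 1 X + u₃(X) • J N
    simp only [hphi, hJn0, hJn1, hJn2, map_add, map_sub, map_smul,
      LinearMap.add_apply, LinearMap.sub_apply, LinearMap.smul_apply,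
      smul_eq_mul, hHU, hHV, hJH, hHXJx, hNJx, hUHX, hVHX, hUN, hVN,
      hJU, hJV, hGU, hGV, map_neg, LinearMap.neg_apply, neg_zero,
      smul_zero, mul_zero, zero_smul, add_zero, sub_zero, zero_add, neg_neg]
    module
end

section
/- (Corollary 3.7: eigenvalues of φ_a.) For each a = 1, 2, 3 and every tangent vector X (i.e. ḡ(X, ξ) = 0), one has φ_a(φ_a(φ_aX)) = -φ_aX. Consequently, if X is a nonzero tangent vector and λ ∈ ℝ satisfies φ_aX = λX, then λ = 0 (so over ℂ the eigenvalues of φ_a lie in {0, i, -i}). -/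
theorem aux13 {E : Type*} [AddCommGroup E] [Module ℝ E]
    (g : E →ₗ[ℝ] E →ₗ[ℝ] ℝ)
    (K : E →ₗ[ℝ] E) (U V ξ N : E)
    (skew : ∀ X Y : E, g (K X) Y = -(g X (K Y)))
    (hKU : K U = 0) (hKV : K V = 0)
    (hKK : ∀ X : E, K (K X) = -X + g U X • U + g V X • V)
    (hUx : g U ξ = 0) (hVx : g V ξ = 0)
    (hUN : g U N = 0) (hVN : g V N = 0)
    (hNx : g N ξ = 1) (hNKx : g N (K ξ) = 0)
    (φ : E → E) (hφ : ∀ Y : E, φ Y = K Y + g Y (K ξ) • N)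
    (X : E) (hX : g X ξ = 0) :
    φ (φ (φ X)) = -(φ X) ∧ (X ≠ 0 → ∀ lam : ℝ, φ X = lam • X → lam = 0) := by
  have hU0 : g U (K ξ) = 0 := by
    have h := skew U ξ
    rw [hKU] at h
    simp at h
    linarith
  have hV0 : g V (K ξ) = 0 := by
    have h := skew V ξ
    rw [hKV] at h
    simp at h
    linarith
  have hKXKx : g (K X) (K ξ) = 0 := by
    rw [skew, hKK]
    simp [hUx, hVx, hX]
  have hKNKx : g (K N) (K ξ) = 1 := by
    rw [skew, hKK]
    simp [hUx, hVx, hNx]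
  have step2 : φ (φ X) = -X + g U X • U + g V X • V + g X (K ξ) • K N := by
    rw [hφ X, hφ]
    simp [map_add, map_smul, smul_eq_mul, hKXKx, hNKx, hKK X]
  have hZKx : g (φ (φ X)) (K ξ) = 0 := by
    rw [step2]
    simp [map_add, map_neg, map_smul, smul_eq_mul, hU0, hV0, hKNKx]
  have step3 : φ (φ (φ X)) = -(φ X) := by
    rw [hφ (φ (φ X)), hZKx, step2, hφ X]
    simp [map_add, map_neg, map_smul, hKU, hKV, hKK N, hUN, hVN, smul_add, smul_neg]
    abel
  refine ⟨step3, ?_⟩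
  intro hX0 lam hlam
  have hom : ∀ (c : ℝ) (Y : E), φ (c • Y) = c • φ Y := by
    intro c Y
    rw [hφ, hφ]
    simp [map_smul, smul_eq_mul, smul_add, smul_smul]
  have e2 : φ (φ X) = (lam * lam) • X := by
    rw [hlam, hom, hlam, smul_smul]
  have e3 : φ (φ (φ X)) = (lam * lam * lam) • X := by
    rw [e2, hom, hlam, smul_smul]
  have e4 : (lam * lam * lam + lam) • X = 0 := by
    rw [add_smul, e3.symm, step3, hlam]
    abel
  rcases smul_eq_zero.mp e4 with h | h
  · have hfac : lam * (lam * lam + 1) = 0 := by linear_combination h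
    rcases mul_eq_zero.mp hfac with h' | h'
    · exact h'
    · nlinarith [mul_self_nonneg lam]
  · exact absurd h hX0

theorem stmt_13 {E : Type*} [AddCommGroup E] [Module ℝ E]
    (g : E →ₗ[ℝ] E →ₗ[ℝ] ℝ)
    (hg_symm : ∀ X Y : E, g X Y = g Y X)
    (J G H : E →ₗ[ℝ] E) (U V : E)
    (hJJ : ∀ X : E, J (J X) = -X)
    (hJg : ∀ X Y : E, g (J X) (J Y) = g X Y)
    (hG_skew : ∀ X Y : E, g (G X) Y = -(g X (G Y)))
    (hGJ : ∀ X : E, G (J X) = -(J (G X)))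
    (hGU : G U = 0)
    (hUU : g U U = 1)
    (hV : V = -(J U))
    (hH : ∀ X : E, H X = G (J X))
    (hGG : ∀ X : E, G (G X) = -X + (g U X) • U + (g V X) • V)
    (ξ N : E)
    (hxx : g ξ ξ = 0) (hNN : g N N = 0) (hxN : g ξ N = 1)
    (hxU : g ξ U = 0) (hxV : g ξ V = 0) (hNU : g N U = 0) (hNV : g N V = 0)
    (hJxN : g (J ξ) N = 0) (hGxN : g (G ξ) N = 0) (hHxN : g (H ξ) N = 0)
    (Jn : Fin 3 → E →ₗ[ℝ] E)
    (hJn0 : Jn 0 = J) (hJn1 : Jn 1 = G) (hJn2 : Jn 2 = H)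
    (φ : Fin 3 → E → E)
    (hphi : ∀ (a : Fin 3) (X : E),
      φ a X = Jn a X + (g X (Jn a ξ)) • N - (g U X) • (Jn a U) - (g V X) • (Jn a V))
    :
    ∀ (a : Fin 3) (X : E), g X ξ = 0 →
      φ a (φ a (φ a X)) = -(φ a X) ∧
      (X ≠ 0 → ∀ lam : ℝ, φ a X = lam • X → lam = 0) := by
  -- basic derived facts
  have hJskew : ∀ X Y : E, g (J X) Y = -(g X (J Y)) := by
    intro X Y
    have h := hJg X (J Y)
    rw [hJJ Y] at h
    simp at h
    linarith
  have hJU : J U = -V := by rw [hV, neg_neg]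
  have hJV : J V = U := by rw [hV, map_neg, hJJ, neg_neg]
  have hJUU : g (J U) U = 0 := by
    have h := hJskew U U
    rw [hg_symm U (J U)] at h
    linarith
  have hVU : g V U = 0 := by rw [hV]; simp [hJUU]
  have hUV : g U V = 0 := (hg_symm U V).trans hVU
  have hVV : g V V = 1 := by
    rw [hV]
    simpa [hJg] using hUU
  have hGV : G V = 0 := by rw [hV, map_neg, hGJ, hGU, map_zero, neg_neg]
  have hHU : H U = 0 := by rw [hH, hJU, map_neg, hGV, neg_zero]
  have hHV : H V = 0 := by rw [hH, hJV, hGU]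
  have hHskew : ∀ X Y : E, g (H X) Y = -(g X (H Y)) := by
    intro X Y
    simp [hH, hG_skew, hJskew, hGJ]
  have hHH : ∀ X : E, H (H X) = -X + (g U X) • U + (g V X) • V := by
    intro X
    have h : H (H X) = G (G X) := by
      calc H (H X) = G (J (G (J X))) := by rw [hH, hH]
        _ = G (J (-(J (G X)))) := by rw [hGJ X]
        _ = G (G X) := by rw [map_neg, hJJ, neg_neg]
    rw [h, hGG]
  -- symmetric versions
  have hUx' : g U ξ = 0 := (hg_symm U ξ).trans hxU
  have hVx' : g V ξ = 0 := (hg_symm V ξ).trans hxV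
  have hUN' : g U N = 0 := (hg_symm U N).trans hNU
  have hVN' : g V N = 0 := (hg_symm V N).trans hNV
  have hNx' : g N ξ = 1 := (hg_symm N ξ).trans hxN
  have hNJx : g N (J ξ) = 0 := (hg_symm N (J ξ)).trans hJxN
  have hNGx : g N (G ξ) = 0 := (hg_symm N (G ξ)).trans hGxN
  have hNHx : g N (H ξ) = 0 := (hg_symm N (H ξ)).trans hHxN
  -- the modified operator L for the case a = 0
  set L : E →ₗ[ℝ] E := J + LinearMap.smulRight (g U) V - LinearMap.smulRight (g V) U with hL
  have hLapp : ∀ X : E, L X = J X + g U X • V - g V X • U := by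
    intro X
    simp [hL, LinearMap.add_apply, LinearMap.sub_apply, LinearMap.smulRight_apply]
  have hLskew : ∀ X Y : E, g (L X) Y = -(g X (L Y)) := by
    intro X Y
    rw [hLapp, hLapp]
    simp only [map_add, map_sub, map_smul, smul_eq_mul, LinearMap.add_apply,
      LinearMap.sub_apply, LinearMap.smul_apply]
    rw [hJskew X Y, hg_symm X V, hg_symm X U]
    ring
  have hLU : L U = 0 := by
    rw [hLapp, hJU, hUU, hVU]
    simp
  have hLV : L V = 0 := by
    rw [hLapp, hJV, hUV, hVV]
    simp
  have hUJ : ∀ X : E, g U (J X) = g V X := by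
    intro X
    rw [hg_symm U (J X), hJskew, hJU, map_neg, neg_neg, hg_symm X V]
  have hVJ : ∀ X : E, g V (J X) = -(g U X) := by
    intro X
    rw [hg_symm V (J X), hJskew, hJV, hg_symm X U]
  have hLL : ∀ X : E, L (L X) = -X + (g U X) • U + (g V X) • V := by
    intro X
    rw [hLapp X, map_sub, map_add, map_smul, map_smul, hLV, hLU, smul_zero, smul_zero,
      sub_zero, add_zero, hLapp (J X), hJJ, hUJ, hVJ]
    module
  have hLξ : L ξ = J ξ := by
    rw [hLapp, hUx', hVx']
    simp
  -- the three cases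
  intro a X hX
  fin_cases a
  · refine aux13 g L U V ξ N hLskew hLU hLV hLL hUx' hVx' hUN' hVN' hNx'
      (by rw [hLξ]; exact hNJx) (φ 0) ?_ X hX
    intro Y
    rw [hphi 0 Y, hJn0, hLξ, hLapp Y, hJU, hJV]
    simp [smul_neg, sub_neg_eq_add]
    abel
  · refine aux13 g G U V ξ N hG_skew hGU hGV hGG hUx' hVx' hUN' hVN' hNx'
      hNGx (φ 1) ?_ X hX
    intro Y
    rw [hphi 1 Y, hJn1, hGU, hGV]
    simp
  · refine aux13 g H U V ξ N hHskew hHU hHV hHH hUx' hVx' hUN' hVN' hNx'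
      hNHx (φ 2) ?_ X hX
    intro Y
    rw [hphi 2 Y, hJn2, hHU, hHV]
    simp
end

section
/- (Corollary 3.8: almost contact 3-structure on the complement of the vertical distribution.) Let W := {X ∈ E : ḡ(X, ξ) = 0, u(X) = 0, v(X) = 0}. Then for each a = 1, 2, 3: U_a ∈ W; φ_a maps W into W; u_a(U_a) = 1; φ_aU_a = 0; u_a(φ_aX) = 0 for all X ∈ W; and φ_a(φ_aX) = -X + u_a(X)U_a for all X ∈ W. In other words, the triples (φ_a|_W, U_a, u_a|_W), a = 1, 2, 3, define an almost contact 3-structure on W. -/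
private lemma aux_acs {E : Type*} [AddCommGroup E] [Module ℝ E]
    (g : E →ₗ[ℝ] E →ₗ[ℝ] ℝ)
    (hg_symm : ∀ X Y : E, g X Y = g Y X)
    (U V ξ N : E)
    (hxN : g ξ N = 1)
    (hUN : g U N = 0) (hVN : g V N = 0)
    (hUx : g U ξ = 0) (hVx : g V ξ = 0)
    (K : E →ₗ[ℝ] E)
    (Kskew : ∀ X Y : E, g (K X) Y = -(g X (K Y)))
    (KK : ∀ X : E, g U X = 0 → g V X = 0 → K (K X) = -X)
    (hKU : ∀ X : E, g V X = 0 → g (K U) X = 0)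
    (hKV : ∀ X : E, g U X = 0 → g (K V) X = 0)
    (hKxN : g (K ξ) N = 0)
    (φ : E → E)
    (hphi : ∀ X : E, φ X = K X + (g X (K ξ)) • N - (g U X) • (K U) - (g V X) • (K V)) :
    (K N ∈ {X : E | g X ξ = 0 ∧ g U X = 0 ∧ g V X = 0}) ∧
      (∀ X ∈ {X : E | g X ξ = 0 ∧ g U X = 0 ∧ g V X = 0},
        φ X ∈ {X : E | g X ξ = 0 ∧ g U X = 0 ∧ g V X = 0}) ∧
      g (K N) (K ξ) = 1 ∧
      φ (K N) = 0 ∧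
      (∀ X ∈ {X : E | g X ξ = 0 ∧ g U X = 0 ∧ g V X = 0}, g (φ X) (K ξ) = 0) ∧
      (∀ X ∈ {X : E | g X ξ = 0 ∧ g U X = 0 ∧ g V X = 0},
        φ (φ X) = -X + (g X (K ξ)) • (K N)) := by
  have hNx : g N ξ = 1 := by rw [hg_symm]; exact hxN
  have hNKx : g N (K ξ) = 0 := by rw [hg_symm]; exact hKxN
  have hUKN : g U (K N) = 0 := by have h := Kskew U N; rw [hKU N hVN] at h; linarith
  have hVKN : g V (K N) = 0 := by have h := Kskew V N; rw [hKV N hUN] at h; linarith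
  have hKNx : g (K N) ξ = 0 := by rw [Kskew, hNKx, neg_zero]
  have hKNKx : g (K N) (K ξ) = 1 := by
    rw [Kskew, KK ξ hUx hVx, map_neg, neg_neg, hNx]
  have hmem : K N ∈ {X : E | g X ξ = 0 ∧ g U X = 0 ∧ g V X = 0} := ⟨hKNx, hUKN, hVKN⟩
  have hφKN : φ (K N) = 0 := by
    rw [hphi, hUKN, hVKN, hKNKx, KK N hUN hVN]
    simp
  have hφX : ∀ X : E, g U X = 0 → g V X = 0 → φ X = K X + (g X (K ξ)) • N := by
    intro X h2 h3
    rw [hphi, h2, h3]; simp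
  have key2 : ∀ X : E, g X ξ = 0 → g U X = 0 → g V X = 0 →
      (g (φ X) ξ = 0 ∧ g U (φ X) = 0 ∧ g V (φ X) = 0) := by
    intro X h1 h2 h3
    rw [hφX X h2 h3]
    refine ⟨?_, ?_, ?_⟩
    · have hKXx : g (K X) ξ = -(g X (K ξ)) := Kskew X ξ
      simp only [map_add, map_smul, LinearMap.add_apply, LinearMap.smul_apply, smul_eq_mul, hKXx, hNx]
      ring
    · have hm : g U (K X) = 0 := by have h := Kskew U X; rw [hKU X h3] at h; linarith
      simp [map_add, map_smul, smul_eq_mul, hm, hUN]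
    · have hm : g V (K X) = 0 := by have h := Kskew V X; rw [hKV X h2] at h; linarith
      simp [map_add, map_smul, smul_eq_mul, hm, hVN]
  have key5 : ∀ X : E, g X ξ = 0 → g U X = 0 → g V X = 0 → g (φ X) (K ξ) = 0 := by
    intro X h1 h2 h3
    rw [hφX X h2 h3]
    have hm : g (K X) (K ξ) = 0 := by
      rw [Kskew, KK ξ hUx hVx, map_neg, h1]; simp
    simp only [map_add, map_smul, LinearMap.add_apply, LinearMap.smul_apply, smul_eq_mul, hm, hNKx]
    ring
  have key6 : ∀ X : E, g X ξ = 0 → g U X = 0 → g V X = 0 →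
      φ (φ X) = -X + (g X (K ξ)) • (K N) := by
    intro X h1 h2 h3
    obtain ⟨m1, m2, m3⟩ := key2 X h1 h2 h3
    have h5 := key5 X h1 h2 h3
    rw [hφX (φ X) m2 m3, h5, hφX X h2 h3, map_add, map_smul, KK X h2 h3]
    simp
  exact ⟨hmem, fun X hX => key2 X hX.1 hX.2.1 hX.2.2, hKNKx, hφKN,
    fun X hX => key5 X hX.1 hX.2.1 hX.2.2,
    fun X hX => key6 X hX.1 hX.2.1 hX.2.2⟩

theorem stmt_14 {E : Type*} [AddCommGroup E] [Module ℝ E]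
    (g : E →ₗ[ℝ] E →ₗ[ℝ] ℝ)
    (hg_symm : ∀ X Y : E, g X Y = g Y X)
    (J G H : E →ₗ[ℝ] E) (U V : E)
    (hJJ : ∀ X : E, J (J X) = -X)
    (hJg : ∀ X Y : E, g (J X) (J Y) = g X Y)
    (hG_skew : ∀ X Y : E, g (G X) Y = -(g X (G Y)))
    (hGJ : ∀ X : E, G (J X) = -(J (G X)))
    (hGU : G U = 0)
    (hUU : g U U = 1)
    (hV : V = -(J U))
    (hH : ∀ X : E, H X = G (J X))
    (hGG : ∀ X : E, G (G X) = -X + (g U X) • U + (g V X) • V)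
    (ξ N : E)
    (hxx : g ξ ξ = 0) (hNN : g N N = 0) (hxN : g ξ N = 1)
    (hxU : g ξ U = 0) (hxV : g ξ V = 0) (hNU : g N U = 0) (hNV : g N V = 0)
    (hJxN : g (J ξ) N = 0) (hGxN : g (G ξ) N = 0) (hHxN : g (H ξ) N = 0)
    (Jn : Fin 3 → E →ₗ[ℝ] E)
    (hJn0 : Jn 0 = J) (hJn1 : Jn 1 = G) (hJn2 : Jn 2 = H)
    (φ : Fin 3 → E → E)
    (hphi : ∀ (a : Fin 3) (X : E),
      φ a X = Jn a X + (g X (Jn a ξ)) • N - (g U X) • (Jn a U) - (g V X) • (Jn a V))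
    :
    ∀ a : Fin 3,
      (Jn a N ∈ {X : E | g X ξ = 0 ∧ g U X = 0 ∧ g V X = 0}) ∧
      (∀ X ∈ {X : E | g X ξ = 0 ∧ g U X = 0 ∧ g V X = 0},
        φ a X ∈ {X : E | g X ξ = 0 ∧ g U X = 0 ∧ g V X = 0}) ∧
      g (Jn a N) (Jn a ξ) = 1 ∧
      φ a (Jn a N) = 0 ∧
      (∀ X ∈ {X : E | g X ξ = 0 ∧ g U X = 0 ∧ g V X = 0}, g (φ a X) (Jn a ξ) = 0) ∧
      (∀ X ∈ {X : E | g X ξ = 0 ∧ g U X = 0 ∧ g V X = 0},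
        φ a (φ a X) = -X + (g X (Jn a ξ)) • (Jn a N)) := by
  -- basic identities
  have hJskew : ∀ X Y : E, g (J X) Y = -(g X (J Y)) := by
    intro X Y
    have h := hJg X (J Y)
    rw [hJJ, map_neg] at h
    linarith
  have hJU : J U = -V := by rw [hV, neg_neg]
  have hJV : J V = U := by rw [hV, map_neg, hJJ, neg_neg]
  have hGV : G V = 0 := by rw [hV, map_neg, hGJ, neg_neg, hGU, map_zero]
  have hHU : H U = 0 := by rw [hH, hJU, map_neg, hGV, neg_zero]
  have hHV : H V = 0 := by rw [hH, hJV, hGU]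
  have hHskew : ∀ X Y : E, g (H X) Y = -(g X (H Y)) := by
    intro X Y
    have e : J (G Y) = -(G (J Y)) := by rw [hGJ, neg_neg]
    have h1 := hG_skew (J X) Y
    have h2 := hJskew X (G Y)
    have h3 : g X (J (G Y)) = -(g X (G (J Y))) := by rw [e, map_neg]
    rw [hH, hH, h1, h2, h3]; ring
  have hHH : ∀ X : E, H (H X) = -X + (g U X) • U + (g V X) • V := by
    intro X
    have e : J (G (J X)) = G X := by
      have e1 := hGJ (J X)
      rw [hJJ, map_neg] at e1
      exact neg_inj.mp e1.symm
    rw [hH, hH, e, hGG]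
  -- symmetric versions of scalar hypotheses
  have hUx : g U ξ = 0 := by rw [hg_symm]; exact hxU
  have hVx : g V ξ = 0 := by rw [hg_symm]; exact hxV
  have hUN : g U N = 0 := by rw [hg_symm]; exact hNU
  have hVN : g V N = 0 := by rw [hg_symm]; exact hNV
  intro a
  have ha : a = 0 ∨ a = 1 ∨ a = 2 := by omega
  rcases ha with rfl | rfl | rfl
  · -- a = 0 : K = J
    simp only [hJn0]
    refine aux_acs g hg_symm U V ξ N hxN hUN hVN hUx hVx J hJskew
      (fun X _ _ => hJJ X) ?_ ?_ hJxN (φ 0) ?_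
    · intro X h; rw [hJU]; simp [h]
    · intro X h; rw [hJV]; exact h
    · intro X; have := hphi 0 X; rwa [hJn0] at this
  · -- a = 1 : K = G
    simp only [hJn1]
    refine aux_acs g hg_symm U V ξ N hxN hUN hVN hUx hVx G hG_skew ?_ ?_ ?_ hGxN (φ 1) ?_
    · intro X h2 h3; rw [hGG, h2, h3]; simp
    · intro X _; rw [hGU]; simp
    · intro X _; rw [hGV]; simp
    · intro X; have := hphi 1 X; rwa [hJn1] at this
  · -- a = 2 : K = H
    simp only [hJn2]
    refine aux_acs g hg_symm U V ξ N hxN hUN hVN hUx hVx H hHskew ?_ ?_ ?_ hHxN (φ 2) ?_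
    · intro X h2 h3; rw [hHH, h2, h3]; simp
    · intro X _; rw [hHU]; simp
    · intro X _; rw [hHV]; simp
    · intro X; have := hphi 2 X; rwa [hJn2] at this
end
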